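/- arXiv:1310.3195 — 4 statements merged into one kernel-verified Lean document; each statement's English description precedes it below -/
import Mathlib

section
/- For every finite alphabet A ⊆ Λ and every language L ⊆ A* definable by a first-order sentence over words, the syntactic monoid M_L of L is aperiodic, i.e., there exists k ≥ 1 such that u^{k+1} = u^k for every u ∈ M_L (equivalently, the identity a^π a = a^π holds in M_L). -/
set_option autoImplicit false

instance instCountableLex {α : Type*} [Countable α] : Countable (Lex α) :=
  inferInstanceAs (Countable α)

namespace EFGames

/-! ### Syntax of first-order logic over words.
Letters of the alphabet `Λ` and first-order variables are represented by natural numbers. -/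

inductive FOForm : Type where
  | top | bot | empt
  | eq (x y : ℕ) | lab (x a : ℕ)
  | lt (x y : ℕ) | le (x y : ℕ) | suc (x y : ℕ)
  | fmin (x : ℕ) | fmax (x : ℕ)
  | not (φ : FOForm) | or (φ ψ : FOForm) | and (φ ψ : FOForm)
  | ex (x : ℕ) (φ : FOForm) | all (x : ℕ) (φ : FOForm)

/-- Free variables of a formula. -/
def FOForm.FV : FOForm → Finset ℕ
  | .top | .bot | .empt => ∅
  | .eq x y | .lt x y | .le x y | .suc x y => {x, y}
  | .lab x _ | .fmin x | .fmax x => {x}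
  | .not φ => φ.FV
  | .or φ ψ | .and φ ψ => φ.FV ∪ ψ.FV
  | .ex x φ | .all x φ => φ.FV.erase x

/-- Quantifier depth. -/
def FOForm.qd : FOForm → ℕ
  | .not φ => φ.qd
  | .or φ ψ | .and φ ψ => max φ.qd ψ.qd
  | .ex _ φ | .all _ φ => φ.qd + 1
  | _ => 0

/-- All variables occurring in a formula (free or bound). -/
def FOForm.vars : FOForm → Finset ℕ
  | .top | .bot | .empt => ∅
  | .eq x y | .lt x y | .le x y | .suc x y => {x, y}
  | .lab x _ | .fmin x | .fmax x => {x}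
  | .not φ => φ.vars
  | .or φ ψ | .and φ ψ => φ.vars ∪ ψ.vars
  | .ex x φ | .all x φ => insert x φ.vars

/-- The formula contains none of the predicates `suc`, `min`, `max`, `empty`. -/
def FOForm.NoSMME : FOForm → Prop
  | .empt | .suc _ _ | .fmin _ | .fmax _ => False
  | .not φ => φ.NoSMME
  | .or φ ψ | .and φ ψ => φ.NoSMME ∧ ψ.NoSMME
  | .ex _ φ | .all _ φ => φ.NoSMME
  | _ => True

/-- The formula contains the predicate `≤` or `<`. -/
def FOForm.HasOrder : FOForm → Prop
  | .lt _ _ | .le _ _ => True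
  | .not φ => φ.HasOrder
  | .or φ ψ | .and φ ψ => φ.HasOrder ∨ ψ.HasOrder
  | .ex _ φ | .all _ φ => φ.HasOrder
  | _ => False

/-- The formula contains one of the predicates `suc`, `min`, `max`, `empty`. -/
def FOForm.HasSMME : FOForm → Prop
  | .empt | .suc _ _ | .fmin _ | .fmax _ => True
  | .not φ => φ.HasSMME
  | .or φ ψ | .and φ ψ => φ.HasSMME ∨ ψ.HasSMME
  | .ex _ φ | .all _ φ => φ.HasSMME
  | _ => False

def FOForm.IsAtomic : FOForm → Prop
  | .top | .bot | .empt | .eq _ _ | .lab _ _ | .lt _ _ | .le _ _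
  | .suc _ _ | .fmin _ | .fmax _ => True
  | _ => False

/-- A literal is an atomic formula or a negated atomic formula. -/
def FOForm.IsLiteral (φ : FOForm) : Prop :=
  φ.IsAtomic ∨ ∃ ψ : FOForm, ψ.IsAtomic ∧ φ = .not ψ

/-- A sentence is a formula without free variables. -/
def FOForm.IsSentence (φ : FOForm) : Prop := φ.FV = ∅

/-- Contexts: formulas with exactly one occurrence of a placeholder `∘`. -/
inductive FOCtx : Type where
  | hole
  | notC (μ : FOCtx)
  | orL (μ : FOCtx) (ψ : FOForm)
  | orR (φ : FOForm) (μ : FOCtx)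
  | andL (μ : FOCtx) (ψ : FOForm)
  | andR (φ : FOForm) (μ : FOCtx)
  | exC (x : ℕ) (μ : FOCtx)
  | allC (x : ℕ) (μ : FOCtx)

/-- Substituting a formula for the placeholder of a context. -/
def FOCtx.subst : FOCtx → FOForm → FOForm
  | .hole, φ => φ
  | .notC μ, φ => .not (μ.subst φ)
  | .orL μ ψ, φ => .or (μ.subst φ) ψ
  | .orR χ μ, φ => .or χ (μ.subst φ)
  | .andL μ ψ, φ => .and (μ.subst φ) ψ
  | .andR χ μ, φ => .and χ (μ.subst φ)
  | .exC x μ, φ => .ex x (μ.subst φ)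
  | .allC x μ, φ => .all x (μ.subst φ)

/-- A fragment: a nonempty set of formulas satisfying the syntactic closure properties. -/
structure IsFragment (F : Set FOForm) : Prop where
  nonempty : F.Nonempty
  top_mem : ∀ (μ : FOCtx) (φ : FOForm), μ.subst φ ∈ F → μ.subst .top ∈ F
  bot_mem : ∀ (μ : FOCtx) (φ : FOForm), μ.subst φ ∈ F → μ.subst .bot ∈ F
  lab_mem : ∀ (μ : FOCtx) (φ : FOForm) (x a : ℕ), μ.subst φ ∈ F → μ.subst (.lab x a) ∈ F
  or_mem : ∀ (μ : FOCtx) (φ ψ : FOForm),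
    μ.subst (.or φ ψ) ∈ F ↔ μ.subst φ ∈ F ∧ μ.subst ψ ∈ F
  and_mem : ∀ (μ : FOCtx) (φ ψ : FOForm),
    μ.subst (.and φ ψ) ∈ F ↔ μ.subst φ ∈ F ∧ μ.subst ψ ∈ F
  negneg : ∀ (μ : FOCtx) (φ : FOForm), μ.subst (.not (.not φ)) ∈ F → μ.subst φ ∈ F
  ex_drop : ∀ (μ : FOCtx) (φ : FOForm) (x : ℕ),
    μ.subst (.ex x φ) ∈ F → x ∉ φ.FV → μ.subst φ ∈ F
  all_drop : ∀ (μ : FOCtx) (φ : FOForm) (x : ℕ),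
    μ.subst (.all x φ) ∈ F → x ∉ φ.FV → μ.subst φ ∈ F

/-- A fragment is order-stable if `μ(x<y) ∈ F ↔ μ(x≤y) ∈ F`. -/
def OrderStable (F : Set FOForm) : Prop :=
  ∀ (μ : FOCtx) (x y : ℕ), μ.subst (.lt x y) ∈ F ↔ μ.subst (.le x y) ∈ F

/-- A fragment is suc-stable if it satisfies the two closure conditions for `suc`, `min`, `max`, `empty`. -/
def SucStable (F : Set FOForm) : Prop :=
  (∀ (μ : FOCtx) (x y : ℕ), μ.subst (.suc x y) ∈ F →
      μ.subst (.eq x y) ∈ F ∧ μ.subst (.fmax x) ∈ F ∧ μ.subst (.fmin y) ∈ F) ∧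
  (∀ (μ : FOCtx) (x : ℕ), (μ.subst (.fmin x) ∈ F ∨ μ.subst (.fmax x) ∈ F) →
      μ.subst .empt ∈ F)

/-- The fragment has quantifier depth bounded by `n`. -/
def QDBoundedBy (F : Set FOForm) (n : ℕ) : Prop := ∀ φ ∈ F, φ.qd ≤ n

/-- Quantifiers, including the negated quantifiers. -/
inductive Quant : Type | qex | qall | qnex | qnall

def Quant.apply : Quant → ℕ → FOForm → FOForm
  | .qex, x, φ => .ex x φ
  | .qall, x, φ => .all x φ
  | .qnex, x, φ => .not (.ex x φ)
  | .qnall, x, φ => .not (.all x φ)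

/-- The reduct `Qx⁻¹F` of a set of formulas. -/
def reduct (Q : Quant) (x : ℕ) (F : Set FOForm) : Set FOForm := {φ | Q.apply x φ ∈ F}
/-! ### Generalized words -/

/-- A (countable) generalized word over the alphabet `ℕ`: a countable linear order
labeled by letters. Words are compared up to label-preserving order isomorphism
(`GWord.Iso`). -/
structure GWord : Type 1 where
  carrier : Type
  ord : LinearOrder carrier
  cnt : Countable carrier
  label : carrier → ℕ

attribute [instance] GWord.ord GWord.cnt

/-- Label-preserving order isomorphism of generalized words. -/
def GWord.Iso (u v : GWord) : Prop :=
  ∃ f : u.carrier ≃o v.carrier, ∀ p : u.carrier, v.label (f p) = u.label p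

/-- Satisfaction of a formula in a word under a (partial) valuation of the variables. -/
def GWord.Sat (u : GWord) : (ℕ → Option u.carrier) → FOForm → Prop
  | _, .top => True
  | _, .bot => False
  | _, .empt => IsEmpty u.carrier
  | α, .eq x y => ∃ p q : u.carrier, α x = some p ∧ α y = some q ∧ p = q
  | α, .lab x a => ∃ p : u.carrier, α x = some p ∧ u.label p = a
  | α, .lt x y => ∃ p q : u.carrier, α x = some p ∧ α y = some q ∧ p < q
  | α, .le x y => ∃ p q : u.carrier, α x = some p ∧ α y = some q ∧ p ≤ q
  | α, .suc x y => ∃ p q : u.carrier, α x = some p ∧ α y = some q ∧ p < q ∧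
      ∀ r : u.carrier, ¬ (p < r ∧ r < q)
  | α, .fmin x => ∃ p : u.carrier, α x = some p ∧ ∀ q : u.carrier, p ≤ q
  | α, .fmax x => ∃ p : u.carrier, α x = some p ∧ ∀ q : u.carrier, q ≤ p
  | α, .not φ => ¬ u.Sat α φ
  | α, .or φ ψ => u.Sat α φ ∨ u.Sat α ψ
  | α, .and φ ψ => u.Sat α φ ∧ u.Sat α ψ
  | α, .ex x φ => ∃ p : u.carrier, u.Sat (fun y => if y = x then some p else α y) φ
  | α, .all x φ => ∀ p : u.carrier, u.Sat (fun y => if y = x then some p else α y) φ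

/-- The empty valuation. -/
def emptyVal (u : GWord) : ℕ → Option u.carrier := fun _ => none

/-- A word satisfies a sentence. -/
def SatS (u : GWord) (φ : FOForm) : Prop := u.Sat (emptyVal u) φ

/-- Updating a valuation at a variable. -/
def updVal {u : GWord} (α : ℕ → Option u.carrier) (x : ℕ) (p : u.carrier) :
    ℕ → Option u.carrier :=
  fun y => if y = x then some p else α y

/-- The domain of the valuation `α` is exactly the finite set `V`. -/
def ValDom {u : GWord} (α : ℕ → Option u.carrier) (V : Finset ℕ) : Prop :=
  ∀ x : ℕ, (α x).isSome ↔ x ∈ V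

/-- A finite word, regarded as a generalized word. -/
def listToGWord (w : List ℕ) : GWord :=
  ⟨Fin w.length, inferInstance, inferInstance, w.get⟩

/-- Concatenation of generalized words. -/
def GWord.concat (u v : GWord) : GWord :=
  ⟨u.carrier ⊕ₗ v.carrier, inferInstance, inferInstance,
    fun p => Sum.elim u.label v.label (ofLex p)⟩

/-- The `τ`-power of a word, where `τ` is the order type of the countable linear order `T`:
positions are pairs `(t, p)` ordered with the `T`-component dominant. -/
def GWord.pow (u : GWord) (T : Type) [LinearOrder T] [Countable T] : GWord :=
  ⟨T ×ₗ u.carrier, inferInstance, inferInstance, fun p => u.label (ofLex p).2⟩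

/-- An index type of order type `ρ = ω + ζ·η + ω*`: a copy of `ℕ`, followed by `ℤ × ℚ`
ordered lexicographically with the `ℚ`-component dominant, followed by the negative
integers (the order dual of `ℕ`). -/
abbrev Rho : Type := (ℕ ⊕ₗ (ℚ ×ₗ ℤ)) ⊕ₗ ℕᵒᵈ

/-- ρ-rational words: built from finite words by concatenation and ρ-power
(closed under isomorphism, since words are identified up to isomorphism). -/
inductive RhoRational : GWord → Prop where
  | fin (w : List ℕ) : RhoRational (listToGWord w)
  | concat {u v : GWord} : RhoRational u → RhoRational v → RhoRational (u.concat v)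
  | rpow {u : GWord} : RhoRational u → RhoRational (u.pow Rho)
  | iso {u v : GWord} : RhoRational u → GWord.Iso u v → RhoRational v
/-! ### The `F`-game -/

/-- A configuration of the `F`-game: a set of formulas (an iterated reduct of the
original fragment) together with two valuations on two words. -/
structure Config : Type 1 where
  frag : Set FOForm
  w1 : GWord
  w2 : GWord
  val1 : ℕ → Option w1.carrier
  val2 : ℕ → Option w2.carrier

/-- Spoiler's winning condition: the configuration contains a literal with free variables
inside the valuation domain, satisfied in the first valuation but not in the second. -/
def SpoilerWinsNow (C : Config) : Prop :=
  ∃ φ ∈ C.frag, φ.IsLiteral ∧ (∀ y ∈ φ.FV, (C.val1 y).isSome) ∧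
    C.w1.Sat C.val1 φ ∧ ¬ C.w2.Sat C.val2 φ

/-- A set of configurations is a (Duplicator-)safe invariant: no configuration in it is
immediately winning for Spoiler, and for every move of Spoiler (a quantifier `Q`, a
variable `x` with nonempty reduct, and a quest `q` in the appropriate word) Duplicator
has a reply `r` leading back into the set (the valuations are swapped for negated
quantifiers). -/
def SafeInv (Good : Set Config) : Prop :=
  ∀ D ∈ Good,
    (¬ SpoilerWinsNow D) ∧
    (∀ x : ℕ, (reduct .qex x D.frag).Nonempty →
      ∀ q : D.w1.carrier, ∃ r : D.w2.carrier,
        (⟨reduct .qex x D.frag, D.w1, D.w2, updVal D.val1 x q, updVal D.val2 x r⟩ : Config) ∈ Good) ∧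
    (∀ x : ℕ, (reduct .qall x D.frag).Nonempty →
      ∀ q : D.w2.carrier, ∃ r : D.w1.carrier,
        (⟨reduct .qall x D.frag, D.w1, D.w2, updVal D.val1 x r, updVal D.val2 x q⟩ : Config) ∈ Good) ∧
    (∀ x : ℕ, (reduct .qnex x D.frag).Nonempty →
      ∀ q : D.w2.carrier, ∃ r : D.w1.carrier,
        (⟨reduct .qnex x D.frag, D.w2, D.w1, updVal D.val2 x q, updVal D.val1 x r⟩ : Config) ∈ Good) ∧
    (∀ x : ℕ, (reduct .qnall x D.frag).Nonempty →
      ∀ q : D.w1.carrier, ∃ r : D.w2.carrier,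
        (⟨reduct .qnall x D.frag, D.w2, D.w1, updVal D.val2 x r, updVal D.val1 x q⟩ : Config) ∈ Good)

/-- Duplicator has a winning strategy from a configuration of this (possibly infinite)
safety game iff some safe invariant contains the configuration. -/
def DuplicatorWins (C : Config) : Prop :=
  ∃ Good : Set Config, C ∈ Good ∧ SafeInv Good

/-- Duplicator has a winning strategy in the `F`-game on `(u, v)` (from the initial
configuration with empty valuations). -/
def DuplicatorWinsGame (F : Set FOForm) (u v : GWord) : Prop :=
  DuplicatorWins ⟨F, u, v, fun _ => none, fun _ => none⟩

/-- Spoiler has a winning strategy: either the current configuration is already winning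
for Spoiler, or Spoiler has a move such that every reply of Duplicator (in particular,
no possible reply) leads to a configuration where Spoiler wins. -/
inductive SpoilerWins : Config → Prop where
  | now {C : Config} : SpoilerWinsNow C → SpoilerWins C
  | mex {C : Config} (x : ℕ) (h : (reduct .qex x C.frag).Nonempty) (q : C.w1.carrier)
      (h2 : ∀ r : C.w2.carrier, SpoilerWins
        ⟨reduct .qex x C.frag, C.w1, C.w2, updVal C.val1 x q, updVal C.val2 x r⟩) :
      SpoilerWins C

/-! ### π-terms and their interpretations -/

/-- π-terms over the alphabet `ℕ` (elements of the free π-algebra). -/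
inductive PiTerm : Type where
  | letter (a : ℕ)
  | mul (s t : PiTerm)
  | pi (s : PiTerm)

/-- The interpretation `⟦·⟧_ρ` of π-terms as generalized words: letters become
single-position words, products concatenations, and the π-power the ρ-power. -/
def PiTerm.evalRho : PiTerm → GWord
  | .letter a => listToGWord [a]
  | .mul s t => s.evalRho.concat t.evalRho
  | .pi s => s.evalRho.pow Rho

/-- The interpretation `⟦·⟧_m` of π-terms as finite words: the π-power becomes
the `m`-fold concatenation power. -/
def PiTerm.evalFin (m : ℕ) : PiTerm → GWord
  | .letter a => listToGWord [a]
  | .mul s t => (s.evalFin m).concat (t.evalFin m)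
  | .pi s => (s.evalFin m).pow (Fin m)

/-- `mpow u k = u^(k+1)`: positive powers in any semigroup (or magma). -/
def mpow {M : Type} [Mul M] (u : M) : ℕ → M
  | 0 => u
  | k+1 => mpow u k * u

/-- `k+1` is an idempotency exponent of `M`: `u^(k+1)` is idempotent for every `u`. -/
def IsIdemExpnt (M : Type) [Mul M] (k : ℕ) : Prop :=
  ∀ u : M, mpow u k * mpow u k = mpow u k

/-- Evaluation of a π-term in `M` under a letter assignment `h`, interpreting the
π-power as the `(k+1)`-st power. -/
def PiTerm.evalMul {M : Type} [Mul M] (h : ℕ → M) (k : ℕ) : PiTerm → M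
  | .letter a => h a
  | .mul s t => (s.evalMul h k) * (t.evalMul h k)
  | .pi s => mpow (s.evalMul h k) k

/-- The identity `s = t` of π-terms holds in `M`: for every assignment of the letters and
every idempotency exponent (i.e. interpreting `(·)^π` as the idempotent power), the two
terms evaluate equally. -/
def PiIdentityHolds (M : Type) [Mul M] (s t : PiTerm) : Prop :=
  ∀ (h : ℕ → M) (k : ℕ), IsIdemExpnt M k → s.evalMul h k = t.evalMul h k

/-! ### Languages, definability and syntactic monoids/semigroups -/

/-- All letters of the finite word `w` belong to the alphabet `A`. -/
def InAlph (A : Finset ℕ) (w : FreeMonoid ℕ) : Prop :=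
  ∀ a ∈ FreeMonoid.toList w, a ∈ A

/-- A finite word, regarded as a generalized word. -/
def wordToGWord (w : FreeMonoid ℕ) : GWord := listToGWord (FreeMonoid.toList w)

/-- The submonoid `A* ⊆ Λ*` of words over the finite alphabet `A`. -/
def wordsOver (A : Finset ℕ) : Submonoid (FreeMonoid ℕ) where
  carrier := {w | InAlph A w}
  mul_mem' := by
    intro u v hu hv a ha
    rw [FreeMonoid.toList_mul] at ha
    rcases List.mem_append.mp ha with h | h
    exacts [hu a h, hv a h]
  one_mem' := by
    intro a ha
    simp [FreeMonoid.toList_one] at ha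

/-- The single-letter word `a ∈ A*`. -/
def letterWord (A : Finset ℕ) (a : ℕ) (ha : a ∈ A) : ↥(wordsOver A) :=
  ⟨FreeMonoid.of a, by
    intro b hb
    rw [FreeMonoid.toList_of] at hb
    rcases List.mem_singleton.mp hb with rfl
    exact ha⟩

/-- The language over `A` defined by the sentence `φ`. -/
def LangOf (A : Finset ℕ) (φ : FOForm) : Set (FreeMonoid ℕ) :=
  {w | InAlph A w ∧ SatS (wordToGWord w) φ}

/-- `L ⊆ A*` is definable in `F` over the alphabet `A`. -/
def DefinableIn (F : Set FOForm) (A : Finset ℕ) (L : Set (FreeMonoid ℕ)) : Prop :=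
  ∃ φ ∈ F, φ.IsSentence ∧ L = LangOf A φ

/-- The syntactic congruence of `L` on `A*`: `u ≡_L v` iff `xuy ∈ L ⇔ xvy ∈ L` for all
contexts `x, y ∈ A*`. -/
def synCon (A : Finset ℕ) (L : Set (FreeMonoid ℕ)) : Con ↥(wordsOver A) where
  r u v := ∀ x y : FreeMonoid ℕ, InAlph A x → InAlph A y →
    ((x * ↑u * y ∈ L) ↔ (x * ↑v * y ∈ L))
  iseqv := ⟨fun _ _ _ _ _ => Iff.rfl,
    fun h x y hx hy => (h x y hx hy).symm,
    fun h1 h2 x y hx hy => (h1 x y hx hy).trans (h2 x y hx hy)⟩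
  mul' := by
    intro w x y z h1 h2 a b ha hb
    have hyb : InAlph A ((y : FreeMonoid ℕ) * b) := by
      intro c hc
      rw [FreeMonoid.toList_mul] at hc
      rcases List.mem_append.mp hc with h | h
      exacts [y.2 c h, hb c h]
    have hax : InAlph A (a * (x : FreeMonoid ℕ)) := by
      intro c hc
      rw [FreeMonoid.toList_mul] at hc
      rcases List.mem_append.mp hc with h | h
      exacts [ha c h, x.2 c h]
    have e1 : a * ↑(w * y) * b = a * (w : FreeMonoid ℕ) * (↑y * b) := by
      push_cast; simp [mul_assoc]
    have e2 : a * (x : FreeMonoid ℕ) * (↑y * b) = (a * ↑x) * ↑y * b := by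
      simp [mul_assoc]
    have e3 : (a * (x : FreeMonoid ℕ)) * ↑z * b = a * ↑(x * z) * b := by
      push_cast; simp [mul_assoc]
    rw [e1, h1 a (↑y * b) ha hyb, e2, h2 (a * ↑x) b hax hb, e3]

/-- The syntactic monoid `M_L = A*/≡_L`. -/
def SynMonoid (A : Finset ℕ) (L : Set (FreeMonoid ℕ)) : Type := (synCon A L).Quotient

instance (A : Finset ℕ) (L : Set (FreeMonoid ℕ)) : Monoid (SynMonoid A L) :=
  inferInstanceAs (Monoid (synCon A L).Quotient)

/-- The subsemigroup `A⁺ ⊆ Λ*` of nonempty words over the finite alphabet `A`. -/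
def plusWordsOver (A : Finset ℕ) : Subsemigroup (FreeMonoid ℕ) where
  carrier := {w | w ≠ 1 ∧ InAlph A w}
  mul_mem' := by
    intro u v hu hv
    refine ⟨?_, ?_⟩
    · intro h
      apply hu.1
      have : FreeMonoid.toList (u * v) = FreeMonoid.toList (1 : FreeMonoid ℕ) := by rw [h]
      rw [FreeMonoid.toList_mul, FreeMonoid.toList_one] at this
      exact (List.append_eq_nil_iff.mp this).1
    · intro a ha
      rw [FreeMonoid.toList_mul] at ha
      rcases List.mem_append.mp ha with h | h
      exacts [hu.2 a h, hv.2 a h]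

/-- The syntactic congruence of `L ⊆ A⁺` on `A⁺` (contexts range over `A*`). -/
def synConS (A : Finset ℕ) (L : Set (FreeMonoid ℕ)) : Con ↥(plusWordsOver A) where
  r u v := ∀ x y : FreeMonoid ℕ, InAlph A x → InAlph A y →
    ((x * ↑u * y ∈ L) ↔ (x * ↑v * y ∈ L))
  iseqv := ⟨fun _ _ _ _ _ => Iff.rfl,
    fun h x y hx hy => (h x y hx hy).symm,
    fun h1 h2 x y hx hy => (h1 x y hx hy).trans (h2 x y hx hy)⟩
  mul' := by
    intro w x y z h1 h2 a b ha hb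
    have hyb : InAlph A ((y : FreeMonoid ℕ) * b) := by
      intro c hc
      rw [FreeMonoid.toList_mul] at hc
      rcases List.mem_append.mp hc with h | h
      exacts [y.2.2 c h, hb c h]
    have hax : InAlph A (a * (x : FreeMonoid ℕ)) := by
      intro c hc
      rw [FreeMonoid.toList_mul] at hc
      rcases List.mem_append.mp hc with h | h
      exacts [ha c h, x.2.2 c h]
    have e1 : a * ↑(w * y) * b = a * (w : FreeMonoid ℕ) * (↑y * b) := by
      push_cast; simp [mul_assoc]
    have e2 : a * (x : FreeMonoid ℕ) * (↑y * b) = (a * ↑x) * ↑y * b := by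
      simp [mul_assoc]
    have e3 : (a * (x : FreeMonoid ℕ)) * ↑z * b = a * ↑(x * z) * b := by
      push_cast; simp [mul_assoc]
    rw [e1, h1 a (↑y * b) ha hyb, e2, h2 (a * ↑x) b hax hb, e3]

/-- The syntactic semigroup of `L ⊆ A⁺`. -/
def SynSemigroup (A : Finset ℕ) (L : Set (FreeMonoid ℕ)) : Type := (synConS A L).Quotient

instance (A : Finset ℕ) (L : Set (FreeMonoid ℕ)) : Semigroup (SynSemigroup A L) :=
  inferInstanceAs (Semigroup (synConS A L).Quotient)

/-- The language of nonempty words over `A` defined by the sentence `φ`. -/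
def LangOfPlus (A : Finset ℕ) (φ : FOForm) : Set (FreeMonoid ℕ) :=
  {w | w ≠ 1 ∧ InAlph A w ∧ SatS (wordToGWord w) φ}

/-- `L ⊆ A⁺` is definable in `F` over the alphabet `A`, over nonempty words. -/
def DefinablePlusIn (F : Set FOForm) (A : Finset ℕ) (L : Set (FreeMonoid ℕ)) : Prop :=
  ∃ φ ∈ F, φ.IsSentence ∧ L = LangOfPlus A φ

/-! ### Concatenation of finite families and unions of valuations -/

/-- Concatenation of a finite family of words `u 0, u 1, …, u (k-1)` (in this order). -/
def GWord.concatFam {k : ℕ} (u : Fin k → GWord) : GWord :=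
  ⟨Σₗ i : Fin k, (u i).carrier, inferInstance,
    inferInstanceAs (Countable (Lex (Σ i : Fin k, (u i).carrier))),
    fun p => (u (ofLex p).1).label (ofLex p).2⟩

/-- The union of a family of valuations with (mutually disjoint) domains, as a valuation
on the concatenation. -/
def combineVal {k : ℕ} (u : Fin k → GWord) (α : ∀ i : Fin k, ℕ → Option (u i).carrier)
    (x : ℕ) : Option (GWord.concatFam u).carrier :=
  (List.finRange k).findSome? fun i => ((α i x).map fun p => toLex ⟨i, p⟩)


/-! Ehrenfeucht–Fraïssé games. Duplicator's strategies compose along concatenation. A pebble on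
the `i`-th copy of `w` in `w ^ a` splits it as `w ^ i * w * w ^ (a - 1 - i)`; answering in a copy
of `w ^ b` that leaves on each side either as many copies or at least `2 ^ n - 1` of them, induction
on `n` shows that Duplicator survives `n` rounds on `w ^ a` and `w ^ b` once
`a, b ≥ 2 ^ (n + 1) - 1`. Words on which Duplicator survives `n` rounds satisfy the same sentences
of quantifier depth `n`, so in the syntactic monoid of the language of `φ` the powers of every
element are constant from the exponent `2 ^ (qd φ + 1) - 1` on. -/

structure IsPartialIso (w₁ w₂ : List ℕ) (ps : Set (ℕ × ℕ)) : Prop where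
  length_eq_zero_iff : w₁.length = 0 ↔ w₂.length = 0
  lt_length : ∀ pq ∈ ps, pq.1 < w₁.length ∧ pq.2 < w₂.length
  getElem?_eq : ∀ pq ∈ ps, w₁[pq.1]? = w₂[pq.2]?
  eq_zero_iff : ∀ pq ∈ ps, pq.1 = 0 ↔ pq.2 = 0
  add_one_eq_length_iff : ∀ pq ∈ ps, pq.1 + 1 = w₁.length ↔ pq.2 + 1 = w₂.length
  lt_iff : ∀ pq ∈ ps, ∀ pq' ∈ ps, pq.1 < pq'.1 ↔ pq.2 < pq'.2
  add_one_eq_iff : ∀ pq ∈ ps, ∀ pq' ∈ ps, pq.1 + 1 = pq'.1 ↔ pq.2 + 1 = pq'.2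

/-- Duplicator survives `n` more rounds of the game on `w₁, w₂` in which the pairs of positions
in `ps` are pebbled. -/
def EFWins : ℕ → List ℕ → List ℕ → Set (ℕ × ℕ) → Prop
  | 0, w₁, w₂, ps => IsPartialIso w₁ w₂ ps
  | n + 1, w₁, w₂, ps => IsPartialIso w₁ w₂ ps ∧
      (∀ p < w₁.length, ∃ q < w₂.length, EFWins n w₁ w₂ (insert (p, q) ps)) ∧
      (∀ q < w₂.length, ∃ p < w₁.length, EFWins n w₁ w₂ (insert (p, q) ps))

namespace IsPartialIso

variable {w₁ w₂ : List ℕ} {ps : Set (ℕ × ℕ)}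

theorem le_iff (h : IsPartialIso w₁ w₂ ps) :
    ∀ pq ∈ ps, ∀ pq' ∈ ps, pq.1 ≤ pq'.1 ↔ pq.2 ≤ pq'.2 := fun pq hpq pq' hpq' => by
  simpa only [not_lt] using (h.lt_iff pq' hpq' pq hpq).not

theorem eq_iff (h : IsPartialIso w₁ w₂ ps) :
    ∀ pq ∈ ps, ∀ pq' ∈ ps, pq.1 = pq'.1 ↔ pq.2 = pq'.2 := fun pq hpq pq' hpq' => by
  have := h.lt_iff pq hpq pq' hpq'
  have := h.lt_iff pq' hpq' pq hpq
  omega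

end IsPartialIso

theorem EFWins.isPartialIso {n : ℕ} {w₁ w₂ : List ℕ} {ps : Set (ℕ × ℕ)}
    (h : EFWins n w₁ w₂ ps) : IsPartialIso w₁ w₂ ps := by
  cases n
  exacts [h, h.1]

theorem EFWins.of_succ : ∀ {n : ℕ} {w₁ w₂ : List ℕ} {ps : Set (ℕ × ℕ)},
    EFWins (n + 1) w₁ w₂ ps → EFWins n w₁ w₂ ps
  | 0, _, _, _, h => h.1
  | _ + 1, _, _, _, ⟨hI, forth, back⟩ =>
    ⟨hI, fun p hp => (forth p hp).imp fun _ ⟨hq, h⟩ => ⟨hq, h.of_succ⟩,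
      fun q hq => (back q hq).imp fun _ ⟨hp, h⟩ => ⟨hp, h.of_succ⟩⟩

theorem isPartialIso_self (w : List ℕ) {ps : Set (ℕ × ℕ)}
    (hps : ∀ pq ∈ ps, pq.1 = pq.2 ∧ pq.1 < w.length) : IsPartialIso w w ps where
  length_eq_zero_iff := Iff.rfl
  lt_length pq hpq := by obtain ⟨h, h'⟩ := hps pq hpq; exact ⟨h', h ▸ h'⟩
  getElem?_eq pq hpq := by rw [(hps pq hpq).1]
  eq_zero_iff pq hpq := by rw [(hps pq hpq).1]
  add_one_eq_length_iff pq hpq := by rw [(hps pq hpq).1]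
  lt_iff pq hpq pq' hpq' := by rw [(hps pq hpq).1, (hps pq' hpq').1]
  add_one_eq_iff pq hpq pq' hpq' := by rw [(hps pq hpq).1, (hps pq' hpq').1]

theorem efWins_self (n : ℕ) (w : List ℕ) {ps : Set (ℕ × ℕ)}
    (hps : ∀ pq ∈ ps, pq.1 = pq.2 ∧ pq.1 < w.length) : EFWins n w w ps := by
  induction n generalizing ps with
  | zero => exact isPartialIso_self w hps
  | succ n ih =>
    have step : ∀ p < w.length, EFWins n w w (insert (p, p) ps) := fun p hp =>
      ih (by rintro _ (rfl | hpq); exacts [⟨rfl, hp⟩, hps _ hpq])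
    exact ⟨isPartialIso_self w hps, fun p hp => ⟨p, hp, step p hp⟩,
      fun q hq => ⟨q, hq, step q hq⟩⟩

section Append

variable {w₁ w₂ v₁ v₂ : List ℕ} {ps qs : Set (ℕ × ℕ)}

theorem IsPartialIso.append (h : IsPartialIso w₁ w₂ ps) (h' : IsPartialIso v₁ v₂ qs) :
    IsPartialIso (w₁ ++ v₁) (w₂ ++ v₂)
      (ps ∪ Prod.map (· + w₁.length) (· + w₂.length) '' qs) where
  length_eq_zero_iff := by
    have := h.length_eq_zero_iff; have := h'.length_eq_zero_iff
    simp only [List.length_append]; omega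
  lt_length := by
    rintro _ (hpq | ⟨pq, hpq, rfl⟩)
    · have := h.lt_length _ hpq; simp only [List.length_append]; omega
    · have := h'.lt_length _ hpq; simp only [Prod.map, List.length_append]; omega
  getElem?_eq := by
    rintro _ (hpq | ⟨pq, hpq, rfl⟩)
    · obtain ⟨h₁, h₂⟩ := h.lt_length _ hpq
      rw [List.getElem?_append_left h₁, List.getElem?_append_left h₂, h.getElem?_eq _ hpq]
    · simp [List.getElem?_append_right, h'.getElem?_eq _ hpq]
  eq_zero_iff := by
    rintro _ (hpq | ⟨pq, hpq, rfl⟩)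
    · exact h.eq_zero_iff _ hpq
    · have := h.length_eq_zero_iff; have := h'.eq_zero_iff _ hpq
      simp only [Prod.map]; omega
  add_one_eq_length_iff := by
    rintro _ (hpq | ⟨pq, hpq, rfl⟩)
    · have := h.add_one_eq_length_iff _ hpq; have := h.lt_length _ hpq
      have := h'.length_eq_zero_iff
      simp only [List.length_append]; omega
    · have := h'.add_one_eq_length_iff _ hpq
      simp only [Prod.map, List.length_append]; omega
  lt_iff := by
    rintro _ (hpq | ⟨pq, hpq, rfl⟩) _ (hpq' | ⟨pq', hpq', rfl⟩)
    · exact h.lt_iff _ hpq _ hpq'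
    · have := h.lt_length _ hpq; simp only [Prod.map]; omega
    · have := h.lt_length _ hpq'; simp only [Prod.map]; omega
    · have := h'.lt_iff _ hpq _ hpq'; simp only [Prod.map]; omega
  add_one_eq_iff := by
    rintro _ (hpq | ⟨pq, hpq, rfl⟩) _ (hpq' | ⟨pq', hpq', rfl⟩)
    · exact h.add_one_eq_iff _ hpq _ hpq'
    · have := h.lt_length _ hpq; have := h.add_one_eq_length_iff _ hpq
      have := h'.eq_zero_iff _ hpq'; simp only [Prod.map]; omega
    · have := h.lt_length _ hpq'; simp only [Prod.map]; omega
    · have := h'.add_one_eq_iff _ hpq _ hpq'; simp only [Prod.map]; omega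

theorem EFWins.append : ∀ {n : ℕ} {w₁ w₂ v₁ v₂ : List ℕ} {ps qs : Set (ℕ × ℕ)},
    EFWins n w₁ w₂ ps → EFWins n v₁ v₂ qs →
    EFWins n (w₁ ++ v₁) (w₂ ++ v₂)
      (ps ∪ Prod.map (· + w₁.length) (· + w₂.length) '' qs)
  | 0, _, _, _, _, _, _, h, h' => IsPartialIso.append h h'
  | n + 1, w₁, w₂, v₁, v₂, ps, qs, h, h' => by
    refine ⟨h.1.append h'.1, fun p hp => ?_, fun q hq => ?_⟩
    · rw [List.length_append] at hp
      rcases lt_or_ge p w₁.length with hp₁ | hp₁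
      · obtain ⟨q, hq, hw⟩ := h.2.1 p hp₁
        refine ⟨q, by simp only [List.length_append]; omega, ?_⟩
        simpa only [Set.insert_union] using hw.append h'.of_succ
      · obtain ⟨q, hq, hv⟩ := h'.2.1 (p - w₁.length) (by omega)
        refine ⟨q + w₂.length, by simp only [List.length_append]; omega, ?_⟩
        simpa only [Set.image_insert_eq, Set.union_insert, Prod.map, Nat.sub_add_cancel hp₁]
          using h.of_succ.append hv
    · rw [List.length_append] at hq
      rcases lt_or_ge q w₂.length with hq₂ | hq₂
      · obtain ⟨p, hp, hw⟩ := h.2.2 q hq₂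
        refine ⟨p, by simp only [List.length_append]; omega, ?_⟩
        simpa only [Set.insert_union] using hw.append h'.of_succ
      · obtain ⟨p, hp, hv⟩ := h'.2.2 (q - w₂.length) (by omega)
        refine ⟨p + w₁.length, by simp only [List.length_append]; omega, ?_⟩
        simpa only [Set.image_insert_eq, Set.union_insert, Prod.map, Nat.sub_add_cancel hq₂]
          using h.of_succ.append hv

end Append

section Pow

theorem length_toList_pow {α : Type*} (w : FreeMonoid α) (a : ℕ) :
    (w ^ a).toList.length = w.toList.length * a := by
  induction a with
  | zero => rfl
  | succ a ih => rw [pow_succ, FreeMonoid.toList_mul, List.length_append, ih, Nat.mul_succ]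

theorem exists_block_match {N a b i : ℕ} (ha : 2 * N + 1 ≤ a) (hb : 2 * N + 1 ≤ b)
    (hi : i < a) : ∃ i' < b, (i = i' ∨ N ≤ i ∧ N ≤ i') ∧
      (a - 1 - i = b - 1 - i' ∨ N ≤ a - 1 - i ∧ N ≤ b - 1 - i') := by
  by_cases h₁ : i < N
  · exact ⟨i, by omega, by omega, by omega⟩
  by_cases h₂ : a - 1 - i < N
  · exact ⟨b - 1 - (a - 1 - i), by omega, by omega, by omega⟩
  exact ⟨N, by omega, by omega, by omega⟩

variable {w : FreeMonoid ℕ}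

theorem efWins_pow_singleton {n N : ℕ}
    (hN : ∀ {c d}, (c = d ∨ N ≤ c ∧ N ≤ d) → EFWins n (w ^ c).toList (w ^ d).toList ∅)
    {a b i i' j : ℕ} (hi : i < a) (hi' : i' < b) (hj : j < w.toList.length)
    (hL : i = i' ∨ N ≤ i ∧ N ≤ i')
    (hR : a - 1 - i = b - 1 - i' ∨ N ≤ a - 1 - i ∧ N ≤ b - 1 - i') :
    EFWins n (w ^ a).toList (w ^ b).toList
      {(w.toList.length * i + j, w.toList.length * i' + j)} := by
  have split : ∀ c k, k < c → w ^ c = w ^ k * w * w ^ (c - 1 - k) := fun c k hk => by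
    rw [← pow_succ, ← pow_add]; congr 1; omega
  have h := ((hN hL).append (efWins_self n w.toList (ps := {(j, j)}) (by simpa))).append
    (hN hR)
  rw [split a i hi, split b i' hi']
  simpa [length_toList_pow, add_comm] using h

theorem exists_eq_mul_add_of_lt_mul {l a p : ℕ} (hp : p < l * a) :
    ∃ i < a, ∃ j < l, p = l * i + j := by
  have hl : 0 < l := Nat.pos_of_ne_zero (by rintro rfl; simp at hp)
  exact ⟨p / l, Nat.div_lt_of_lt_mul hp, p % l, Nat.mod_lt _ hl, (Nat.div_add_mod p l).symm⟩

theorem mul_add_lt_mul {l i j b : ℕ} (hi : i < b) (hj : j < l) : l * i + j < l * b :=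
  calc l * i + j < l * (i + 1) := by rw [Nat.mul_succ]; omega
    _ ≤ l * b := Nat.mul_le_mul_left l hi

theorem efWins_pow_of_le (n : ℕ) {a b : ℕ}
    (hab : a = b ∨ 2 ^ (n + 1) - 1 ≤ a ∧ 2 ^ (n + 1) - 1 ≤ b) :
    EFWins n (w ^ a).toList (w ^ b).toList ∅ := by
  induction n generalizing a b with
  | zero =>
    rcases hab with rfl | ⟨ha, hb⟩
    · exact efWins_self 0 _ (by simp)
    refine ⟨?_, by simp, by simp, by simp, by simp, by simp, by simp⟩
    simp only [length_toList_pow, Nat.mul_eq_zero]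
    omega
  | succ n ih =>
    rcases hab with rfl | ⟨ha, hb⟩
    · exact efWins_self _ _ (by simp)
    have := Nat.pow_succ 2 (n + 1)
    have := Nat.one_le_two_pow (n := n + 1)
    have ha' : 2 * (2 ^ (n + 1) - 1) + 1 ≤ a := by omega
    have hb' : 2 * (2 ^ (n + 1) - 1) + 1 ≤ b := by omega
    refine ⟨(ih (Or.inr ⟨by omega, by omega⟩)).isPartialIso, fun p hp => ?_, fun q hq => ?_⟩
    · rw [length_toList_pow] at hp
      obtain ⟨i, hi, j, hj, rfl⟩ := exists_eq_mul_add_of_lt_mul hp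
      obtain ⟨i', hi', hL, hR⟩ := exists_block_match ha' hb' hi
      refine ⟨_, length_toList_pow w b ▸ mul_add_lt_mul hi' hj, ?_⟩
      rw [← Set.singleton_def]
      exact efWins_pow_singleton ih hi hi' hj hL hR
    · rw [length_toList_pow] at hq
      obtain ⟨i', hi', j, hj, rfl⟩ := exists_eq_mul_add_of_lt_mul hq
      obtain ⟨i, hi, hL, hR⟩ := exists_block_match hb' ha' hi'
      refine ⟨_, length_toList_pow w a ▸ mul_add_lt_mul hi hj, ?_⟩
      rw [← Set.singleton_def]
      exact efWins_pow_singleton ih hi hi' hj (by omega) (by omega)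

end Pow

theorem isEmpty_fin_iff {m : ℕ} : IsEmpty (Fin m) ↔ m = 0 := by
  rw [← not_nonempty_iff, ← Fin.pos_iff_nonempty]
  omega

theorem fin_covBy_iff {m : ℕ} (p q : Fin m) :
    (p < q ∧ ∀ r : Fin m, ¬ (p < r ∧ r < q)) ↔ (p : ℕ) + 1 = q := by
  rw [← Nat.covBy_iff_add_one_eq, ← Fin.covBy_iff, CovBy]
  simp only [not_and]

theorem fin_forall_le_iff {m : ℕ} (p : Fin m) : (∀ q : Fin m, p ≤ q) ↔ (p : ℕ) = 0 :=
  ⟨fun h => by simpa [Fin.le_def] using h ⟨0, p.pos⟩, fun h q => by rw [Fin.le_def]; omega⟩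

theorem fin_forall_ge_iff {m : ℕ} (p : Fin m) :
    (∀ q : Fin m, q ≤ p) ↔ (p : ℕ) + 1 = m := by
  have := p.isLt
  refine ⟨fun h => ?_, fun h q => by rw [Fin.le_def]; omega⟩
  have := Fin.le_def.1 (h ⟨m - 1, by omega⟩)
  simp only at this
  omega

def Compat {w₁ w₂ : List ℕ} (ps : Set (ℕ × ℕ)) (α₁ : ℕ → Option (Fin w₁.length))
    (α₂ : ℕ → Option (Fin w₂.length)) : Prop :=
  ∀ x, Option.Rel (fun (p : Fin w₁.length) (q : Fin w₂.length) => (p.val, q.val) ∈ ps)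
    (α₁ x) (α₂ x)

namespace Compat

variable {w₁ w₂ : List ℕ} {ps : Set (ℕ × ℕ)} {α₁ : ℕ → Option (Fin w₁.length)}
  {α₂ : ℕ → Option (Fin w₂.length)}

theorem exists_iff (hc : Compat ps α₁ α₂) (x : ℕ) {R₁ : Fin w₁.length → Prop}
    {R₂ : Fin w₂.length → Prop} (hR : ∀ p q, (p.val, q.val) ∈ ps → (R₁ p ↔ R₂ q)) :
    (∃ p, α₁ x = some p ∧ R₁ p) ↔ ∃ q, α₂ x = some q ∧ R₂ q := by
  have h := hc x
  generalize α₁ x = o₁, α₂ x = o₂ at h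
  cases h with
  | none => simp
  | some hpq => simpa using hR _ _ hpq

theorem exists₂_iff (hc : Compat ps α₁ α₂) (x y : ℕ)
    {R₁ : Fin w₁.length → Fin w₁.length → Prop}
    {R₂ : Fin w₂.length → Fin w₂.length → Prop}
    (hR : ∀ p q p' q', (p.val, q.val) ∈ ps → (p'.val, q'.val) ∈ ps →
      (R₁ p p' ↔ R₂ q q')) :
    (∃ p p', α₁ x = some p ∧ α₁ y = some p' ∧ R₁ p p') ↔
      ∃ q q', α₂ x = some q ∧ α₂ y = some q' ∧ R₂ q q' := by
  simpa only [exists_and_left] using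
    hc.exists_iff x fun p q hpq => hc.exists_iff y fun p' q' hpq' => hR p q p' q' hpq hpq'

theorem update (hc : Compat ps α₁ α₂) (x : ℕ) (p : Fin w₁.length) (q : Fin w₂.length) :
    Compat (insert (p.val, q.val) ps) (fun y => if y = x then some p else α₁ y)
      (fun y => if y = x then some q else α₂ y) := fun y => by
  by_cases hy : y = x
  · simp only [hy, if_true]
    exact .some (Set.mem_insert _ ps)
  · have h := hc y
    simp only [hy, if_false]
    generalize α₁ y = o₁, α₂ y = o₂ at h ⊢
    cases h with
    | none => exact .none
    | some h => exact .some (Set.mem_insert_of_mem _ h)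

end Compat

theorem EFWins.sat_iff {φ : FOForm} : ∀ {n : ℕ} {w₁ w₂ : List ℕ} {ps : Set (ℕ × ℕ)}
    {α₁ : ℕ → Option (Fin w₁.length)} {α₂ : ℕ → Option (Fin w₂.length)},
    EFWins n w₁ w₂ ps → Compat ps α₁ α₂ → φ.qd ≤ n →
    ((listToGWord w₁).Sat α₁ φ ↔ (listToGWord w₂).Sat α₂ φ) := by
  induction φ with
  | top | bot => intros; rfl
  | empt =>
    intro _ _ _ _ _ _ h _ _
    simpa [GWord.Sat, listToGWord, isEmpty_fin_iff] using h.isPartialIso.length_eq_zero_iff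
  | eq x y =>
    refine fun h hc _ => hc.exists₂_iff x y fun p q p' q' hpq hpq' => ?_
    exact Fin.val_inj.symm.trans ((h.isPartialIso.eq_iff _ hpq _ hpq').trans Fin.val_inj)
  | lab x a =>
    intro _ w₁ w₂ _ _ _ h hc _
    refine hc.exists_iff x fun p q hpq => ?_
    have hpq' : w₁.get p = w₂.get q := by simpa using h.isPartialIso.getElem?_eq _ hpq
    exact Eq.congr_left hpq'
  | lt x y =>
    refine fun h hc _ => hc.exists₂_iff x y fun p q p' q' hpq hpq' => ?_
    exact Fin.lt_def.trans ((h.isPartialIso.lt_iff _ hpq _ hpq').trans Fin.lt_def.symm)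
  | le x y =>
    refine fun h hc _ => hc.exists₂_iff x y fun p q p' q' hpq hpq' => ?_
    exact Fin.le_def.trans ((h.isPartialIso.le_iff _ hpq _ hpq').trans Fin.le_def.symm)
  | suc x y =>
    refine fun h hc _ => hc.exists₂_iff x y fun p q p' q' hpq hpq' => ?_
    exact (fin_covBy_iff p p').trans
      ((h.isPartialIso.add_one_eq_iff _ hpq _ hpq').trans (fin_covBy_iff q q').symm)
  | fmin x =>
    refine fun h hc _ => hc.exists_iff x fun p q hpq => ?_
    exact (fin_forall_le_iff p).trans
      ((h.isPartialIso.eq_zero_iff _ hpq).trans (fin_forall_le_iff q).symm)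
  | fmax x =>
    refine fun h hc _ => hc.exists_iff x fun p q hpq => ?_
    exact (fin_forall_ge_iff p).trans
      ((h.isPartialIso.add_one_eq_length_iff _ hpq).trans (fin_forall_ge_iff q).symm)
  | not φ ih => exact fun h hc hφ => (ih h hc hφ).not
  | or φ ψ ihφ ihψ =>
    exact fun h hc hφ =>
      or_congr (ihφ h hc (le_of_max_le_left hφ)) (ihψ h hc (le_of_max_le_right hφ))
  | and φ ψ ihφ ihψ =>
    exact fun h hc hφ =>
      and_congr (ihφ h hc (le_of_max_le_left hφ)) (ihψ h hc (le_of_max_le_right hφ))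
  | ex x φ ih =>
    rintro (_ | n) w₁ w₂ ps α₁ α₂ ⟨-, forth, back⟩ hc hφ
    · simp [FOForm.qd] at hφ
    replace hφ : φ.qd ≤ n := Nat.le_of_succ_le_succ hφ
    constructor
    · rintro ⟨p, hp⟩
      obtain ⟨q, hq, h⟩ := forth (Fin.val p) (Fin.isLt p)
      exact ⟨⟨q, hq⟩, (ih h (hc.update x p ⟨q, hq⟩) hφ).1 hp⟩
    · rintro ⟨q, hq⟩
      obtain ⟨p, hp, h⟩ := back (Fin.val q) (Fin.isLt q)
      exact ⟨⟨p, hp⟩, (ih h (hc.update x ⟨p, hp⟩ q) hφ).2 hq⟩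
  | all x φ ih =>
    rintro (_ | n) w₁ w₂ ps α₁ α₂ ⟨-, forth, back⟩ hc hφ
    · simp [FOForm.qd] at hφ
    replace hφ : φ.qd ≤ n := Nat.le_of_succ_le_succ hφ
    constructor
    · intro hall q
      obtain ⟨p, hp, h⟩ := back (Fin.val q) (Fin.isLt q)
      exact (ih h (hc.update x ⟨p, hp⟩ q) hφ).1 (hall ⟨p, hp⟩)
    · intro hall p
      obtain ⟨q, hq, h⟩ := forth (Fin.val p) (Fin.isLt p)
      exact (ih h (hc.update x p ⟨q, hq⟩) hφ).2 (hall ⟨q, hq⟩)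

theorem satS_mul_pow_mul_iff (φ : FOForm) (x w y : FreeMonoid ℕ) {a b : ℕ}
    (ha : 2 ^ (φ.qd + 1) - 1 ≤ a) (hb : 2 ^ (φ.qd + 1) - 1 ≤ b) :
    SatS (wordToGWord (x * w ^ a * y)) φ ↔ SatS (wordToGWord (x * w ^ b * y)) φ := by
  have h := ((efWins_self φ.qd x.toList (ps := ∅) (by simp)).append
    (efWins_pow_of_le (w := w) φ.qd (Or.inr ⟨ha, hb⟩))).append
    (efWins_self φ.qd y.toList (ps := ∅) (by simp))
  simp only [Set.image_empty, Set.union_empty] at h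
  exact h.sat_iff (fun _ => .none) le_rfl

theorem SynMonoid.pow_eq_pow {A : Finset ℕ} {L : Set (FreeMonoid ℕ)} {m n : ℕ}
    (h : ∀ w : wordsOver A, ∀ x y, InAlph A x → InAlph A y →
      (x * (w : FreeMonoid ℕ) ^ m * y ∈ L ↔ x * (w : FreeMonoid ℕ) ^ n * y ∈ L))
    (u : SynMonoid A L) : u ^ m = u ^ n := by
  obtain ⟨w, rfl⟩ := (synCon A L).mk'_surjective u
  show ((synCon A L).mk' w : (synCon A L).Quotient) ^ m =
    ((synCon A L).mk' w : (synCon A L).Quotient) ^ n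
  rw [← map_pow, ← map_pow, Con.coe_mk', Con.eq]
  intro x y hx hy
  simpa only [SubmonoidClass.coe_pow] using h w x y hx hy

/-- the syntactic monoid of every first-order definable language is
aperiodic: there is `k ≥ 1` with `u^(k+1) = u^k` for all `u ∈ M_L`. -/
theorem statement_9 (A : Finset ℕ) (L : Set (FreeMonoid ℕ))
    (hdef : DefinableIn Set.univ A L) :
    ∃ k : ℕ, 1 ≤ k ∧ ∀ u : SynMonoid A L, u ^ (k + 1) = u ^ k := by
  obtain ⟨φ, -, -, rfl⟩ := hdef
  have := Nat.one_lt_two_pow (n := φ.qd + 1) (by omega)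
  refine ⟨2 ^ (φ.qd + 1) - 1, by omega, SynMonoid.pow_eq_pow fun w x y hx hy => ?_⟩
  have mem : ∀ m, InAlph A (x * (w : FreeMonoid ℕ) ^ m * y) := fun m =>
    mul_mem (mul_mem hx (pow_mem w.2 m)) hy
  simp only [LangOf, Set.mem_ofPred_eq, mem, true_and]
  exact satS_mul_pow_mul_iff φ x w y (by omega) le_rfl

end EFGames
end

section
/- Let F be a fragment of bounded quantifier depth and let ⟨u,α⟩, ⟨v,β⟩ be V-valuations. If ⟨u,α⟩ ⊨ φ implies ⟨v,β⟩ ⊨ φ for all formulas φ ∈ F with FV(φ) ⊆ V, then Duplicator has a winning strategy in the configuration (F, ⟨u,α⟩, ⟨v,β⟩) of the F-game. (Here the logic is over words over a fixed finite alphabet A ⊆ Λ, so that up to logical equivalence there are only finitely many formulas of each quantifier depth with free variables in V.) -/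
set_option autoImplicit false

namespace EFGames

/-! Duplicator maintains the invariant that every formula of the current reduct true in the
first valuation is true in the second. If after Spoiler's move `∃x` with a position `q` no
reply `r` restored it, each `r` would be refuted by some formula `φ_r`. Over a finite
alphabet, formulas of quantifier depth `≤ n` with free variables in a fixed finite set have
only finitely many truth functions on a fixed word, so finitely many `φ_r` suffice. Their
conjunction `φ` lies in the reduct, `∃x φ` holds in the first valuation, hence in the
second, and its witness `r` satisfies `φ_r`, a contradiction. `∀`-moves are dual, with a
disjunction, and the negated quantifiers swap the roles of the two words. -/

abbrev Val (w : GWord) : Type := ℕ → Option w.carrier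

theorem GWord.sat_congr_fv (w : GWord) {φ : FOForm} {γ γ' : Val w}
    (h : ∀ y ∈ φ.FV, γ y = γ' y) : w.Sat γ φ ↔ w.Sat γ' φ := by
  induction φ generalizing γ γ' with
  | not ψ ih => exact not_congr (ih h)
  | or ψ χ ih₁ ih₂ =>
    exact or_congr (ih₁ fun y hy => h y (Finset.mem_union_left _ hy))
      (ih₂ fun y hy => h y (Finset.mem_union_right _ hy))
  | and ψ χ ih₁ ih₂ =>
    exact and_congr (ih₁ fun y hy => h y (Finset.mem_union_left _ hy))
      (ih₂ fun y hy => h y (Finset.mem_union_right _ hy))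
  | ex x ψ ih =>
    refine exists_congr fun p => ih fun y hy => ?_
    by_cases hyx : y = x
    · simp [hyx]
    · simp [hyx, h y (Finset.mem_erase.2 ⟨hyx, hy⟩)]
  | all x ψ ih =>
    refine forall_congr' fun p => ih fun y hy => ?_
    by_cases hyx : y = x
    · simp [hyx]
    · simp [hyx, h y (Finset.mem_erase.2 ⟨hyx, hy⟩)]
  | _ => simp_all [GWord.Sat, FOForm.FV]

/-- The Boolean combinations of the predicates in `S`, encoded as arbitrary functions of their
truth values. -/
def boolSpan {X : Type*} (S : Set (X → Prop)) : Set (X → Prop) :=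
  {f | ∃ B : (S → Prop) → Prop, f = fun x => B fun g => g.1 x}

section BoolSpan

variable {X : Type*} {S : Set (X → Prop)} {f g : X → Prop}

theorem subset_boolSpan : S ⊆ boolSpan S :=
  fun f hf => ⟨fun e => e ⟨f, hf⟩, rfl⟩

theorem mem_boolSpan_not (hf : f ∈ boolSpan S) : (fun x => ¬ f x) ∈ boolSpan S := by
  obtain ⟨B, rfl⟩ := hf
  exact ⟨fun e => ¬ B e, rfl⟩

theorem mem_boolSpan_or (hf : f ∈ boolSpan S) (hg : g ∈ boolSpan S) :
    (fun x => f x ∨ g x) ∈ boolSpan S := by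
  obtain ⟨B, rfl⟩ := hf
  obtain ⟨C, rfl⟩ := hg
  exact ⟨fun e => B e ∨ C e, rfl⟩

theorem mem_boolSpan_and (hf : f ∈ boolSpan S) (hg : g ∈ boolSpan S) :
    (fun x => f x ∧ g x) ∈ boolSpan S := by
  obtain ⟨B, rfl⟩ := hf
  obtain ⟨C, rfl⟩ := hg
  exact ⟨fun e => B e ∧ C e, rfl⟩

theorem Set.Finite.boolSpan (hS : S.Finite) : (boolSpan S).Finite := by
  have : Finite S := hS.to_subtype
  exact (Set.finite_range fun B : (S → Prop) → Prop => fun x => B fun g => g.1 x).subset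
    fun f ⟨B, hB⟩ => ⟨B, hB.symm⟩

end BoolSpan

/-- Reading formulas through a renaming `σ` of their free variables into `W` lets every bound
variable be replaced by a single fresh one, which keeps these sets finite. -/
def truthFns (w : GWord) (n : ℕ) (W : Finset ℕ) : Set (Val w → Prop) :=
  {f | ∃ (φ : FOForm) (σ : ℕ → ℕ), φ.qd ≤ n ∧ (∀ y ∈ φ.FV, σ y ∈ W) ∧
    f = fun γ => w.Sat (γ ∘ σ) φ}

def atomsOver (A W : Finset ℕ) : Set FOForm :=
  {.top, .bot, .empt} ∪ (⋃ x ∈ W, ⋃ y ∈ W, {.eq x y, .lt x y, .le x y, .suc x y}) ∪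
    ⋃ x ∈ W, {.fmin x, .fmax x} ∪ FOForm.lab x '' A

theorem atomsOver_finite (A W : Finset ℕ) : (atomsOver A W).Finite := by
  unfold atomsOver
  exact Set.toFinite _

section TruthFns

variable {A : Finset ℕ} {w : GWord}

theorem atom_truthFn_mem (hw : ∀ p, w.label p ∈ A) {W : Finset ℕ} {φ : FOForm}
    (hφ : φ.IsAtomic) {σ : ℕ → ℕ} (hσ : ∀ y ∈ φ.FV, σ y ∈ W) :
    (fun γ : Val w => w.Sat (γ ∘ σ) φ) ∈ (fun φ γ => w.Sat γ φ) '' atomsOver A W := by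
  cases φ with
  | top => exact ⟨.top, by simp [atomsOver], rfl⟩
  | bot => exact ⟨.bot, by simp [atomsOver], rfl⟩
  | empt => exact ⟨.empt, by simp [atomsOver], rfl⟩
  | eq x y => exact ⟨.eq (σ x) (σ y), by simp_all [atomsOver, FOForm.FV], rfl⟩
  | lt x y => exact ⟨.lt (σ x) (σ y), by simp_all [atomsOver, FOForm.FV], rfl⟩
  | le x y => exact ⟨.le (σ x) (σ y), by simp_all [atomsOver, FOForm.FV], rfl⟩
  | suc x y => exact ⟨.suc (σ x) (σ y), by simp_all [atomsOver, FOForm.FV], rfl⟩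
  | fmin x => exact ⟨.fmin (σ x), by simp_all [atomsOver, FOForm.FV], rfl⟩
  | fmax x => exact ⟨.fmax (σ x), by simp_all [atomsOver, FOForm.FV], rfl⟩
  | lab x a =>
    by_cases ha : a ∈ A
    · exact ⟨.lab (σ x) a, by simp_all [atomsOver, FOForm.FV], rfl⟩
    -- a letter outside the alphabet labels no position
    · refine ⟨.bot, by simp [atomsOver], funext fun γ => propext ?_⟩
      simp only [GWord.Sat, false_iff, not_exists, not_and]
      exact fun p _ hp => ha (hp ▸ hw p)
  | _ => exact hφ.elim

def truthFnGens (A : Finset ℕ) (w : GWord) (n : ℕ) (W : Finset ℕ) (x₀ : ℕ) :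
    Set (Val w → Prop) :=
  (fun φ γ => w.Sat γ φ) '' atomsOver A W ∪
    ⋃ m < n, (fun g γ => ∃ p, g (updVal γ x₀ p)) '' truthFns w m (insert x₀ W)

theorem ex_truthFn_mem {n : ℕ} {W : Finset ℕ} {x₀ : ℕ} (hx₀ : x₀ ∉ W) {x : ℕ}
    {ψ : FOForm} (hqd : (FOForm.ex x ψ).qd ≤ n) {σ : ℕ → ℕ}
    (hσ : ∀ y ∈ (FOForm.ex x ψ).FV, σ y ∈ W) :
    (fun γ : Val w => w.Sat (γ ∘ σ) (.ex x ψ)) ∈ truthFnGens A w n W x₀ := by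
  have hσ' : ∀ y ∈ ψ.FV, y ≠ x → σ y ∈ W :=
    fun y hy hyx => hσ y (Finset.mem_erase.2 ⟨hyx, hy⟩)
  -- rename the bound variable `x` to `x₀`
  refine Or.inr (Set.mem_iUnion₂.2 ⟨ψ.qd, hqd,
    fun γ => w.Sat (γ ∘ Function.update σ x x₀) ψ,
    ⟨ψ, _, le_rfl, fun y hy => ?_, rfl⟩, funext fun γ => propext ?_⟩)
  · by_cases hyx : y = x
    · simp [hyx]
    · simp [hyx, hσ' y hy hyx]
  · refine exists_congr fun p => GWord.sat_congr_fv w fun y hy => ?_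
    by_cases hyx : y = x
    · simp [hyx, updVal]
    · have hne : σ y ≠ x₀ := fun h => hx₀ (h ▸ hσ' y hy hyx)
      simp [hyx, updVal, hne]

theorem truthFns_subset_boolSpan (hw : ∀ p, w.label p ∈ A) (n : ℕ) (W : Finset ℕ)
    {x₀ : ℕ} (hx₀ : x₀ ∉ W) : truthFns w n W ⊆ boolSpan (truthFnGens A w n W x₀) := by
  rintro _ ⟨φ, σ, hqd, hσ, rfl⟩
  induction φ generalizing σ with
  | not ψ ih => exact mem_boolSpan_not (ih σ hqd hσ)
  | or ψ χ ih₁ ih₂ =>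
    exact mem_boolSpan_or
      (ih₁ σ (le_of_max_le_left hqd) fun y hy => hσ y (Finset.mem_union_left _ hy))
      (ih₂ σ (le_of_max_le_right hqd) fun y hy => hσ y (Finset.mem_union_right _ hy))
  | and ψ χ ih₁ ih₂ =>
    exact mem_boolSpan_and
      (ih₁ σ (le_of_max_le_left hqd) fun y hy => hσ y (Finset.mem_union_left _ hy))
      (ih₂ σ (le_of_max_le_right hqd) fun y hy => hσ y (Finset.mem_union_right _ hy))
  | ex x ψ => exact subset_boolSpan (ex_truthFn_mem hx₀ hqd hσ)
  | all x ψ =>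
    have hall : (fun γ : Val w => w.Sat (γ ∘ σ) (.all x ψ)) =
        fun γ => ¬ w.Sat (γ ∘ σ) (.ex x (.not ψ)) := by
      funext γ
      simp [GWord.Sat]
    rw [hall]
    exact mem_boolSpan_not (subset_boolSpan (ex_truthFn_mem (ψ := .not ψ) hx₀ hqd hσ))
  | _ => exact subset_boolSpan (Or.inl (atom_truthFn_mem hw (by trivial) hσ))

theorem truthFns_finite (hw : ∀ p, w.label p ∈ A) (n : ℕ) (W : Finset ℕ) :
    (truthFns w n W).Finite := by
  induction n using Nat.strong_induction_on generalizing W with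
  | _ n ih =>
    obtain ⟨x₀, hx₀⟩ := Infinite.exists_notMem_finset W
    refine (Set.Finite.boolSpan ?_).subset (truthFns_subset_boolSpan hw n W hx₀)
    exact ((atomsOver_finite A W).image _).union
      ((Set.finite_Iio n).biUnion fun m hm => (ih m hm _).image _)

end TruthFns

theorem exists_forall_imp_of_finite {ι X Y : Type*} {P : ι → Prop} (a : ι → X → Prop)
    (b : ι → Y → Prop) (hfin : (b '' {i | P i}).Finite)
    (hconj : ∀ s : Finset ι, (∀ i ∈ s, P i) → ∃ k, P k ∧
      (∀ x, a k x ↔ ∀ i ∈ s, a i x) ∧ ∀ y, b k y ↔ ∀ i ∈ s, b i y)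
    (himp : ∀ k, P k → (∃ x, a k x) → ∃ y, b k y) (x : X) :
    ∃ y, ∀ i, P i → a i x → b i y := by
  by_contra! h
  set S := {i | P i ∧ a i x}
  -- finitely many `i ∈ S` realise every `b i` with `i ∈ S`; their conjunction refutes every `y`
  obtain ⟨t, htS, htfin, himg⟩ := Set.exists_subset_image_finite_and.mp
    ⟨b '' S, subset_rfl, hfin.subset (Set.image_mono fun i hi => hi.1), rfl⟩
  have hmem : ∀ i ∈ htfin.toFinset, i ∈ S := fun i hi => htS (htfin.mem_toFinset.1 hi)
  obtain ⟨k, hPk, hak, hbk⟩ := hconj htfin.toFinset fun i hi => (hmem i hi).1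
  obtain ⟨y, hy⟩ := himp k hPk ⟨x, (hak x).2 fun i hi => (hmem i hi).2⟩
  obtain ⟨i, hPi, hai, hbi⟩ := h y
  obtain ⟨j, hjt, hj⟩ : b i ∈ b '' t := himg ▸ ⟨i, ⟨hPi, hai⟩, rfl⟩
  exact hbi (hj ▸ (hbk y).1 hy j (htfin.mem_toFinset.2 hjt))

def FOForm.conj : List FOForm → FOForm
  | [] => .top
  | φ :: L => .and φ (conj L)

def FOForm.disj : List FOForm → FOForm
  | [] => .bot
  | φ :: L => .or φ (disj L)

theorem GWord.sat_conj (w : GWord) (γ : Val w) :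
    ∀ L : List FOForm, w.Sat γ (.conj L) ↔ ∀ φ ∈ L, w.Sat γ φ
  | [] => by simp [FOForm.conj, GWord.Sat]
  | φ :: L => by simp [FOForm.conj, GWord.Sat, sat_conj w γ L]

theorem GWord.sat_disj (w : GWord) (γ : Val w) :
    ∀ L : List FOForm, w.Sat γ (.disj L) ↔ ∃ φ ∈ L, w.Sat γ φ
  | [] => by simp [FOForm.disj, GWord.Sat]
  | φ :: L => by simp [FOForm.disj, GWord.Sat, sat_disj w γ L]

theorem FOForm.fv_conj_subset {W : Finset ℕ} :
    ∀ L : List FOForm, (∀ φ ∈ L, φ.FV ⊆ W) → (conj L).FV ⊆ W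
  | [] => fun _ => by simp [conj, FV]
  | φ :: L => fun h => Finset.union_subset (h φ (by simp))
      (fv_conj_subset L fun ψ hψ => h ψ (by simp [hψ]))

theorem FOForm.fv_disj_subset {W : Finset ℕ} :
    ∀ L : List FOForm, (∀ φ ∈ L, φ.FV ⊆ W) → (disj L).FV ⊆ W
  | [] => fun _ => by simp [disj, FV]
  | φ :: L => fun h => Finset.union_subset (h φ (by simp))
      (fv_disj_subset L fun ψ hψ => h ψ (by simp [hψ]))

theorem FOForm.conj_mem {K : Set FOForm} (htop : FOForm.top ∈ K)
    (hand : ∀ φ ψ, φ ∈ K → ψ ∈ K → FOForm.and φ ψ ∈ K) :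
    ∀ L : List FOForm, (∀ φ ∈ L, φ ∈ K) → conj L ∈ K
  | [] => fun _ => htop
  | φ :: L => fun h =>
    hand _ _ (h φ (by simp)) (conj_mem htop hand L fun ψ hψ => h ψ (by simp [hψ]))

theorem FOForm.disj_mem {K : Set FOForm} (hbot : FOForm.bot ∈ K)
    (hor : ∀ φ ψ, φ ∈ K → ψ ∈ K → FOForm.or φ ψ ∈ K) :
    ∀ L : List FOForm, (∀ φ ∈ L, φ ∈ K) → disj L ∈ K
  | [] => fun _ => hbot
  | φ :: L => fun h =>
    hor _ _ (h φ (by simp)) (disj_mem hbot hor L fun ψ hψ => h ψ (by simp [hψ]))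

/-- Unlike `IsFragment`, this passes to reducts, which may be empty. -/
structure CtxClosed (G : Set FOForm) : Prop where
  top_mem : ∀ (μ : FOCtx) (φ : FOForm), μ.subst φ ∈ G → μ.subst .top ∈ G
  bot_mem : ∀ (μ : FOCtx) (φ : FOForm), μ.subst φ ∈ G → μ.subst .bot ∈ G
  and_mem : ∀ (μ : FOCtx) (φ ψ : FOForm),
    μ.subst φ ∈ G → μ.subst ψ ∈ G → μ.subst (.and φ ψ) ∈ G
  or_mem : ∀ (μ : FOCtx) (φ ψ : FOForm),
    μ.subst φ ∈ G → μ.subst ψ ∈ G → μ.subst (.or φ ψ) ∈ G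

theorem IsFragment.ctxClosed {F : Set FOForm} (hF : IsFragment F) : CtxClosed F :=
  ⟨hF.top_mem, hF.bot_mem, fun μ φ ψ hφ hψ => (hF.and_mem μ φ ψ).2 ⟨hφ, hψ⟩,
    fun μ φ ψ hφ hψ => (hF.or_mem μ φ ψ).2 ⟨hφ, hψ⟩⟩

def Quant.ctx : Quant → ℕ → FOCtx → FOCtx
  | .qex, x, μ => .exC x μ
  | .qall, x, μ => .allC x μ
  | .qnex, x, μ => .notC (.exC x μ)
  | .qnall, x, μ => .notC (.allC x μ)

theorem Quant.ctx_subst (Q : Quant) (x : ℕ) (μ : FOCtx) (φ : FOForm) :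
    (Q.ctx x μ).subst φ = Q.apply x (μ.subst φ) := by
  cases Q <;> rfl

theorem CtxClosed.reduct {G : Set FOForm} (hG : CtxClosed G) (Q : Quant) (x : ℕ) :
    CtxClosed (reduct Q x G) := by
  refine ⟨fun μ φ => ?_, fun μ φ => ?_, fun μ φ ψ => ?_, fun μ φ ψ => ?_⟩ <;>
    simp only [EFGames.reduct, Set.mem_ofPred_eq, ← Q.ctx_subst]
  exacts [hG.top_mem _ φ, hG.bot_mem _ φ, hG.and_mem _ φ ψ, hG.or_mem _ φ ψ]

theorem QDBoundedBy.reduct {G : Set FOForm} {n : ℕ} (h : QDBoundedBy G n) (Q : Quant) (x : ℕ) :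
    QDBoundedBy (reduct Q x G) n := fun φ hφ => by
  have : (Q.apply x φ).qd = φ.qd + 1 := by cases Q <;> rfl
  have := h _ hφ
  omega

def SatImp (K : Set FOForm) (V : Finset ℕ) {u v : GWord} (α : Val u) (β : Val v) : Prop :=
  ∀ φ ∈ K, φ.FV ⊆ V → u.Sat α φ → v.Sat β φ

section SatImp

variable {K K' : Set FOForm} {V : Finset ℕ} {u v : GWord} {α : Val u} {β : Val v}

theorem SatImp.mono (h : SatImp K' V α β) (hK : K ⊆ K') : SatImp K V α β :=
  fun φ hφ => h φ (hK hφ)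

theorem SatImp.of_not (h : SatImp (FOForm.not '' K) V α β) : SatImp K V β α :=
  fun φ hφ hV => not_imp_not.1 (h _ ⟨φ, hφ, rfl⟩ hV)

variable {A : Finset ℕ} {n : ℕ} {x : ℕ}

theorem exists_satImp_updVal_of_ex (hv : ∀ p, v.label p ∈ A) (hK : CtxClosed K)
    (hne : K.Nonempty) (hbd : QDBoundedBy K n) (himp : SatImp (FOForm.ex x '' K) V α β)
    (q : u.carrier) : ∃ r, SatImp K (insert x V) (updVal α x q) (updVal β x r) := by
  obtain ⟨φ₀, hφ₀⟩ := hne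
  refine exists_forall_imp_of_finite (P := fun φ => φ ∈ K ∧ φ.FV ⊆ insert x V)
    (fun φ p => u.Sat (updVal α x p) φ) (fun φ r => v.Sat (updVal β x r) φ) ?_ ?_ ?_ q
      |>.imp fun r hr φ hφ hV => hr φ ⟨hφ, hV⟩
  · refine ((truthFns_finite hv n (insert x V)).image fun f r => f (updVal β x r)).subset ?_
    rintro _ ⟨φ, ⟨hφ, hV⟩, rfl⟩
    exact ⟨_, ⟨φ, id, hbd φ hφ, hV, rfl⟩, rfl⟩
  · intro s hs
    refine ⟨.conj s.toList,
      ⟨FOForm.conj_mem (hK.top_mem .hole φ₀ hφ₀) (hK.and_mem .hole) _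
      fun φ h => (hs φ (by simpa using h)).1, FOForm.fv_conj_subset _
      fun φ h => (hs φ (by simpa using h)).2⟩, fun p => ?_, fun r => ?_⟩ <;>
    simp [GWord.sat_conj]
  · rintro φ ⟨hφ, hV⟩ hex
    exact himp _ ⟨φ, hφ, rfl⟩ (Finset.subset_insert_iff.1 hV) hex

theorem exists_satImp_updVal_of_all (hu : ∀ p, u.label p ∈ A) (hK : CtxClosed K)
    (hne : K.Nonempty) (hbd : QDBoundedBy K n) (himp : SatImp (FOForm.all x '' K) V α β)
    (q : v.carrier) : ∃ r, SatImp K (insert x V) (updVal α x r) (updVal β x q) := by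
  obtain ⟨φ₀, hφ₀⟩ := hne
  -- the dual of the `∃` case: apply the same argument to the negations, from `v` to `u`
  refine exists_forall_imp_of_finite (P := fun φ => φ ∈ K ∧ φ.FV ⊆ insert x V)
    (fun φ r => ¬ v.Sat (updVal β x r) φ) (fun φ p => ¬ u.Sat (updVal α x p) φ) ?_ ?_ ?_ q
      |>.imp fun r hr φ hφ hV => not_imp_not.1 (hr φ ⟨hφ, hV⟩)
  · refine ((truthFns_finite hu n (insert x V)).image fun f p => ¬ f (updVal α x p)).subset ?_
    rintro _ ⟨φ, ⟨hφ, hV⟩, rfl⟩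
    exact ⟨_, ⟨φ, id, hbd φ hφ, hV, rfl⟩, rfl⟩
  · intro s hs
    refine ⟨.disj s.toList,
      ⟨FOForm.disj_mem (hK.bot_mem .hole φ₀ hφ₀) (hK.or_mem .hole) _
      fun φ h => (hs φ (by simpa using h)).1, FOForm.fv_disj_subset _
      fun φ h => (hs φ (by simpa using h)).2⟩, fun r => ?_, fun p => ?_⟩ <;>
    simp [GWord.sat_disj]
  · rintro φ ⟨hφ, hV⟩ ⟨r, hr⟩
    by_contra! hall
    exact hr (himp _ ⟨φ, hφ, rfl⟩ (Finset.subset_insert_iff.1 hV) hall r)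

end SatImp

theorem ValDom.updVal {w : GWord} {α : Val w} {V : Finset ℕ} (h : ValDom α V) (x : ℕ)
    (p : w.carrier) : ValDom (updVal α x p) (insert x V) := by
  intro y
  by_cases hy : y = x <;> simp [EFGames.updVal, hy, h y]

def DuplicatorInvariant (A : Finset ℕ) : Set Config :=
  {D | CtxClosed D.frag ∧ (∃ n, QDBoundedBy D.frag n) ∧ (∀ p, D.w1.label p ∈ A) ∧
    (∀ p, D.w2.label p ∈ A) ∧
    ∃ V, ValDom D.val1 V ∧ ValDom D.val2 V ∧ SatImp D.frag V D.val1 D.val2}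

theorem mem_duplicatorInvariant_of_move {A : Finset ℕ} {G : Set FOForm} (hG : CtxClosed G)
    {n : ℕ} (hbd : QDBoundedBy G n) {u v : GWord} (hu : ∀ p, u.label p ∈ A)
    (hv : ∀ p, v.label p ∈ A) {V : Finset ℕ} {α : Val u} {β : Val v} (hα : ValDom α V)
    (hβ : ValDom β V) {Q : Quant} {x : ℕ} {p : u.carrier} {r : v.carrier}
    (himp : SatImp (reduct Q x G) (insert x V) (updVal α x p) (updVal β x r)) :
    (⟨reduct Q x G, u, v, updVal α x p, updVal β x r⟩ : Config) ∈ DuplicatorInvariant A :=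
  ⟨hG.reduct Q x, ⟨n, hbd.reduct Q x⟩, hu, hv, _, hα.updVal x p, hβ.updVal x r, himp⟩

theorem duplicatorInvariant_safe (A : Finset ℕ) : SafeInv (DuplicatorInvariant A) := by
  rintro ⟨G, u, v, α, β⟩ ⟨hG, ⟨n, hbd⟩, hu, hv, V, hα, hβ, himp⟩
  refine ⟨?_, fun x hne q => ?_, fun x hne q => ?_, fun x hne q => ?_, fun x hne q => ?_⟩
  · rintro ⟨φ, hφ, -, hdom, h₁, h₂⟩
    exact h₂ (himp φ hφ (fun y hy => (hα y).1 (hdom y hy)) h₁)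
  · obtain ⟨r, hr⟩ := exists_satImp_updVal_of_ex hv (hG.reduct .qex x) hne (hbd.reduct .qex x)
      (himp.mono (Set.image_subset_iff.2 fun _ h => h)) q
    exact ⟨r, mem_duplicatorInvariant_of_move hG hbd hu hv hα hβ hr⟩
  · obtain ⟨r, hr⟩ := exists_satImp_updVal_of_all hu (hG.reduct .qall x) hne
      (hbd.reduct .qall x) (himp.mono (Set.image_subset_iff.2 fun _ h => h)) q
    exact ⟨r, mem_duplicatorInvariant_of_move hG hbd hu hv hα hβ hr⟩
  · obtain ⟨r, hr⟩ := exists_satImp_updVal_of_ex hu (hG.reduct .qnex x) hne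
      (hbd.reduct .qnex x)
      (himp.mono (by rintro _ ⟨_, ⟨φ, hφ, rfl⟩, rfl⟩; exact hφ)).of_not q
    exact ⟨r, mem_duplicatorInvariant_of_move hG hbd hv hu hβ hα hr⟩
  · obtain ⟨r, hr⟩ := exists_satImp_updVal_of_all hv (hG.reduct .qnall x) hne
      (hbd.reduct .qnall x)
      (himp.mono (by rintro _ ⟨_, ⟨φ, hφ, rfl⟩, rfl⟩; exact hφ)).of_not q
    exact ⟨r, mem_duplicatorInvariant_of_move hG hbd hv hu hβ hα hr⟩

/-- Proposition: Duplicator wins: over a fixed finite alphabet `A`,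
for a fragment of bounded quantifier depth, if every `φ ∈ F` with `FV(φ) ⊆ V` true in
`⟨u, α⟩` is also true in `⟨v, β⟩`, then Duplicator has a winning strategy in the
configuration `(F, ⟨u, α⟩, ⟨v, β⟩)`. -/
theorem statement_13 (F : Set FOForm) (hF : IsFragment F)
    (hbd : ∃ n : ℕ, QDBoundedBy F n) (A : Finset ℕ) (u v : GWord)
    (hu : ∀ p : u.carrier, u.label p ∈ A) (hv : ∀ p : v.carrier, v.label p ∈ A)
    (V : Finset ℕ) (α : ℕ → Option u.carrier) (β : ℕ → Option v.carrier)
    (hα : ValDom α V) (hβ : ValDom β V)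
    (himp : ∀ φ ∈ F, φ.FV ⊆ V → u.Sat α φ → v.Sat β φ) :
    DuplicatorWins ⟨F, u, v, α, β⟩ :=
  ⟨DuplicatorInvariant A, ⟨hF.ctxClosed, hbd, hu, hv, V, hα, hβ, himp⟩,
    duplicatorInvariant_safe A⟩

end EFGames
end

section
/- For every fragment F, the relation ⊴_F (defined on valuations by ⟨u,α⟩ ⊴_F ⟨v,β⟩ iff Duplicator has a winning strategy in the configuration (F, ⟨u,α⟩, ⟨v,β⟩)) is transitive: if ⟨u,α⟩ ⊴_F ⟨v,β⟩ and ⟨v,β⟩ ⊴_F ⟨w,γ⟩ for V-valuations ⟨u,α⟩, ⟨v,β⟩, ⟨w,γ⟩, then ⟨u,α⟩ ⊴_F ⟨w,γ⟩. -/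
set_option autoImplicit false

namespace EFGames

/-!
Duplicator plays the two winning strategies in parallel, copying each move of Spoiler through
the middle word: a quest in `u` is answered in `v` by the first strategy, and that answer is
treated as a quest for the second strategy, whose answer in `w` is played. A negated
quantifier swaps the two words of each game, so after it the second game is consulted first;
the invariant therefore glues configurations in either order. Spoiler cannot win immediately:
a literal true in `u` and false in `w` is either false in the middle word, against the first
strategy, or true there, against the second; the middle valuation keeps the domain of the
outer ones so that Spoiler's condition on free variables carries over to the second game. -/

def SameDom {X Y : Type} (α : ℕ → Option X) (β : ℕ → Option Y) : Prop :=
  ∀ y, (α y).isSome ↔ (β y).isSome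

theorem SameDom.symm {X Y : Type} {α : ℕ → Option X} {β : ℕ → Option Y}
    (h : SameDom α β) : SameDom β α :=
  fun y => (h y).symm

theorem ValDom.sameDom {u v : GWord} {α : ℕ → Option u.carrier} {β : ℕ → Option v.carrier}
    {V : Finset ℕ} (hα : ValDom α V) (hβ : ValDom β V) : SameDom α β :=
  fun y => (hα y).trans (hβ y).symm

theorem SameDom.updVal {u v : GWord} {α : ℕ → Option u.carrier} {β : ℕ → Option v.carrier}
    (h : SameDom α β) (x : ℕ) (p : u.carrier) (q : v.carrier) :
    SameDom (updVal α x p) (updVal β x q) := by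
  intro y
  by_cases hy : y = x <;> simp [EFGames.updVal, hy, h y]

def glue (A B : Set Config) : Set Config :=
  {C | ∃ (m : GWord) (δ : ℕ → Option m.carrier),
    (⟨C.frag, C.w1, m, C.val1, δ⟩ : Config) ∈ A ∧ (⟨C.frag, m, C.w2, δ, C.val2⟩ : Config) ∈ B ∧
    SameDom C.val1 δ ∧ SameDom δ C.val2}

theorem mem_glue_updVal {A B : Set Config} {G : Set FOForm} {u m w : GWord}
    {α : ℕ → Option u.carrier} {δ : ℕ → Option m.carrier} {γ : ℕ → Option w.carrier}
    (hαδ : SameDom α δ) (hδγ : SameDom δ γ) {x : ℕ} {p : u.carrier} {q : m.carrier}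
    {r : w.carrier} (hA : ⟨G, u, m, updVal α x p, updVal δ x q⟩ ∈ A)
    (hB : ⟨G, m, w, updVal δ x q, updVal γ x r⟩ ∈ B) :
    ⟨G, u, w, updVal α x p, updVal γ x r⟩ ∈ glue A B :=
  ⟨m, updVal δ x q, hA, hB, hαδ.updVal x p q, hδγ.updVal x q r⟩

/-- The condition that `SafeInv Good` imposes on each configuration `D ∈ Good`. -/
def SafeAt (Good : Set Config) (D : Config) : Prop :=
  (¬ SpoilerWinsNow D) ∧
    (∀ x : ℕ, (reduct .qex x D.frag).Nonempty →
      ∀ q : D.w1.carrier, ∃ r : D.w2.carrier,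
        (⟨reduct .qex x D.frag, D.w1, D.w2, updVal D.val1 x q, updVal D.val2 x r⟩ : Config) ∈ Good) ∧
    (∀ x : ℕ, (reduct .qall x D.frag).Nonempty →
      ∀ q : D.w2.carrier, ∃ r : D.w1.carrier,
        (⟨reduct .qall x D.frag, D.w1, D.w2, updVal D.val1 x r, updVal D.val2 x q⟩ : Config) ∈ Good) ∧
    (∀ x : ℕ, (reduct .qnex x D.frag).Nonempty →
      ∀ q : D.w2.carrier, ∃ r : D.w1.carrier,
        (⟨reduct .qnex x D.frag, D.w2, D.w1, updVal D.val2 x q, updVal D.val1 x r⟩ : Config) ∈ Good) ∧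
    (∀ x : ℕ, (reduct .qnall x D.frag).Nonempty →
      ∀ q : D.w1.carrier, ∃ r : D.w2.carrier,
        (⟨reduct .qnall x D.frag, D.w2, D.w1, updVal D.val2 x r, updVal D.val1 x q⟩ : Config) ∈ Good)

theorem safeInv_iff {Good : Set Config} : SafeInv Good ↔ ∀ D ∈ Good, SafeAt Good D :=
  Iff.rfl

section Glue

variable {A B : Set Config}

theorem not_spoilerWinsNow_of_mem_glue (hA : SafeInv A) (hB : SafeInv B) {D : Config}
    (hD : D ∈ glue A B) : ¬ SpoilerWinsNow D := by
  obtain ⟨m, δ, hDA, hDB, hαδ, -⟩ := hD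
  rintro ⟨φ, hφG, hlit, hfv, hu, hw⟩
  by_cases hm : m.Sat δ φ
  · exact (hB _ hDB).1 ⟨φ, hφG, hlit, fun y hy => (hαδ y).mp (hfv y hy), hm, hw⟩
  · exact (hA _ hDA).1 ⟨φ, hφG, hlit, hfv, hu, hm⟩

theorem safeAt_of_mem_glue (hA : SafeInv A) (hB : SafeInv B) {D : Config}
    (hD : D ∈ glue A B) : SafeAt (glue A B ∪ glue B A) D := by
  refine ⟨not_spoilerWinsNow_of_mem_glue hA hB hD, ?_⟩
  obtain ⟨m, δ, hDA, hDB, hαδ, hδγ⟩ := hD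
  obtain ⟨-, exA, allA, nexA, nallA⟩ := hA _ hDA
  obtain ⟨-, exB, allB, nexB, nallB⟩ := hB _ hDB
  refine ⟨fun x hx q => ?_, fun x hx q => ?_, fun x hx q => ?_, fun x hx q => ?_⟩
  · obtain ⟨q', hq'⟩ := exA x hx q
    obtain ⟨r, hr⟩ := exB x hx q'
    exact ⟨r, .inl (mem_glue_updVal hαδ hδγ hq' hr)⟩
  · obtain ⟨q', hq'⟩ := allB x hx q
    obtain ⟨r, hr⟩ := allA x hx q'
    exact ⟨r, .inl (mem_glue_updVal hαδ hδγ hr hq')⟩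
  · obtain ⟨q', hq'⟩ := nexB x hx q
    obtain ⟨r, hr⟩ := nexA x hx q'
    exact ⟨r, .inr (mem_glue_updVal hδγ.symm hαδ.symm hq' hr)⟩
  · obtain ⟨q', hq'⟩ := nallA x hx q
    obtain ⟨r, hr⟩ := nallB x hx q'
    exact ⟨r, .inr (mem_glue_updVal hδγ.symm hαδ.symm hr hq')⟩

theorem safeInv_glue_union (hA : SafeInv A) (hB : SafeInv B) :
    SafeInv (glue A B ∪ glue B A) := by
  rw [safeInv_iff]
  rintro D (hD | hD)
  · exact safeAt_of_mem_glue hA hB hD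
  · simpa only [Set.union_comm] using safeAt_of_mem_glue hB hA hD

end Glue

theorem statement_14_general (F : Set FOForm) (V : Finset ℕ)
    (u v w : GWord) (α : ℕ → Option u.carrier) (β : ℕ → Option v.carrier)
    (γ : ℕ → Option w.carrier) (hα : ValDom α V) (hβ : ValDom β V) (hγ : ValDom γ V)
    (h1 : DuplicatorWins ⟨F, u, v, α, β⟩) (h2 : DuplicatorWins ⟨F, v, w, β, γ⟩) :
    DuplicatorWins ⟨F, u, w, α, γ⟩ := by
  obtain ⟨A, huv, hA⟩ := h1
  obtain ⟨B, hvw, hB⟩ := h2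
  exact ⟨glue A B ∪ glue B A, .inl ⟨v, β, huv, hvw, hα.sameDom hβ, hβ.sameDom hγ⟩,
    safeInv_glue_union hA hB⟩

/-- Proposition: transitivity: the relation "Duplicator has a winning
strategy in the configuration `(F, ·, ·)`" is transitive on `V`-valuations. -/
theorem statement_14 (F : Set FOForm) (hF : IsFragment F) (V : Finset ℕ)
    (u v w : GWord) (α : ℕ → Option u.carrier) (β : ℕ → Option v.carrier)
    (γ : ℕ → Option w.carrier) (hα : ValDom α V) (hβ : ValDom β V) (hγ : ValDom γ V)
    (h1 : DuplicatorWins ⟨F, u, v, α, β⟩) (h2 : DuplicatorWins ⟨F, v, w, β, γ⟩) :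
    DuplicatorWins ⟨F, u, w, α, γ⟩ :=
  statement_14_general F V u v w α β γ hα hβ hγ h1 h2

end EFGames
end

section
/- Let F be a fragment, ⟨u,α⟩ and ⟨v,β⟩ V-valuations, V' ⊆ V, and let ⟨u,α'⟩, ⟨v,β'⟩ be the restrictions of the valuations to V'. If Duplicator has a winning strategy in the configuration (F, ⟨u,α⟩, ⟨v,β⟩), then Duplicator has a winning strategy in the configuration (F, ⟨u,α'⟩, ⟨v,β'⟩). -/
set_option autoImplicit false

namespace EFGames

/-!
Duplicator keeps playing her strategy and simply forgets the discarded variables: the set of all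
restrictions of configurations of a safe invariant is again a safe invariant. A move of Spoiler
commutes with restriction once the quantified variable is added to the kept set, and a literal
whose free variables all survive the restriction has the same truth value before and after it.
-/

theorem GWord.sat_congr (u : GWord) {α α' : ℕ → Option u.carrier} (φ : FOForm)
    (h : ∀ y ∈ φ.FV, α y = α' y) : u.Sat α φ ↔ u.Sat α' φ := by
  have agree_upd : ∀ {α α' : ℕ → Option u.carrier} (x : ℕ) (ψ : FOForm),
      (∀ y ∈ (FOForm.ex x ψ).FV, α y = α' y) → ∀ p : u.carrier, ∀ y ∈ ψ.FV,
        (if y = x then some p else α y) = (if y = x then some p else α' y) := by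
    intro α α' x ψ h p y hy
    split_ifs with hyx
    · rfl
    · exact h y (Finset.mem_erase.2 ⟨hyx, hy⟩)
  induction φ generalizing α α' with
  | not φ ih => exact not_congr (ih h)
  | or φ ψ ihφ ihψ =>
    exact or_congr (ihφ fun y hy => h y (Finset.mem_union_left _ hy))
      (ihψ fun y hy => h y (Finset.mem_union_right _ hy))
  | and φ ψ ihφ ihψ =>
    exact and_congr (ihφ fun y hy => h y (Finset.mem_union_left _ hy))
      (ihψ fun y hy => h y (Finset.mem_union_right _ hy))
  | ex x φ ih => exact exists_congr fun p => ih (agree_upd x φ h p)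
  | all x φ ih => exact forall_congr' fun p => ih (agree_upd x φ h p)
  | _ => simp_all [GWord.Sat, FOForm.FV]

open Classical in
noncomputable def restrictVal {u : GWord} (S : Set ℕ) (α : ℕ → Option u.carrier) (x : ℕ) :
    Option u.carrier :=
  if x ∈ S then α x else none

theorem updVal_restrictVal {u : GWord} (S : Set ℕ) (α : ℕ → Option u.carrier) (x : ℕ)
    (p : u.carrier) :
    updVal (restrictVal S α) x p = restrictVal (insert x S) (updVal α x p) := by
  funext y
  by_cases hyx : y = x <;> by_cases hyS : y ∈ S <;> simp [updVal, restrictVal, hyx, hyS]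

noncomputable abbrev Config.restrict (S : Set ℕ) (D : Config) : Config :=
  ⟨D.frag, D.w1, D.w2, restrictVal S D.val1, restrictVal S D.val2⟩

theorem SpoilerWinsNow.of_restrict {S : Set ℕ} {D : Config}
    (h : SpoilerWinsNow (D.restrict S)) : SpoilerWinsNow D := by
  obtain ⟨φ, hφ, hlit, hdom, hsat₁, hsat₂⟩ := h
  have hkept : ∀ y ∈ φ.FV, y ∈ S ∧ (D.val1 y).isSome := by
    intro y hy
    have hd := hdom y hy
    by_cases hyS : y ∈ S
    · simp_all [Config.restrict, restrictVal]
    · simp [Config.restrict, restrictVal, hyS] at hd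
  have hagree : ∀ {w : GWord} (a : ℕ → Option w.carrier), ∀ y ∈ φ.FV, restrictVal S a y = a y :=
    fun a y hy => by simp [restrictVal, (hkept y hy).1]
  exact ⟨φ, hφ, hlit, fun y hy => (hkept y hy).2,
    (GWord.sat_congr _ φ (hagree D.val1)).mp hsat₁,
    fun hsat => hsat₂ ((GWord.sat_congr _ φ (hagree D.val2)).mpr hsat)⟩

def restrictions (Good : Set Config) : Set Config :=
  {C | ∃ D ∈ Good, ∃ S : Set ℕ, C = D.restrict S}

theorem SafeInv.restrictions {Good : Set Config} (hGood : SafeInv Good) :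
    SafeInv (restrictions Good) := by
  rintro C ⟨D, hD, S, rfl⟩
  obtain ⟨hnow, hex, hall, hnex, hnall⟩ := hGood D hD
  refine ⟨fun h => hnow h.of_restrict, ?_, ?_, ?_, ?_⟩ <;> intro x hne q
  · obtain ⟨r, hr⟩ := hex x hne q
    exact ⟨r, _, hr, insert x S, by simp only [updVal_restrictVal]⟩
  · obtain ⟨r, hr⟩ := hall x hne q
    exact ⟨r, _, hr, insert x S, by simp only [updVal_restrictVal]⟩
  · obtain ⟨r, hr⟩ := hnex x hne q
    exact ⟨r, _, hr, insert x S, by simp only [updVal_restrictVal]⟩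
  · obtain ⟨r, hr⟩ := hnall x hne q
    exact ⟨r, _, hr, insert x S, by simp only [updVal_restrictVal]⟩

theorem DuplicatorWins.restrict {D : Config} (h : DuplicatorWins D) (S : Set ℕ) :
    DuplicatorWins (D.restrict S) := by
  obtain ⟨Good, hD, hGood⟩ := h
  exact ⟨restrictions Good, ⟨D, hD, S, rfl⟩, hGood.restrictions⟩

theorem statement_15_general (F : Set FOForm) (V' : Finset ℕ)
    (u v : GWord) (α : ℕ → Option u.carrier) (β : ℕ → Option v.carrier)
    (h : DuplicatorWins ⟨F, u, v, α, β⟩) :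
    DuplicatorWins ⟨F, u, v, fun x => if x ∈ V' then α x else none,
      fun x => if x ∈ V' then β x else none⟩ := by
  convert h.restrict (V' : Set ℕ) using 2 <;> funext x <;> simp [restrictVal]

/-- Lemma: discarding variables: restricting both valuations of a
configuration won by Duplicator to a subset `V' ⊆ V` again yields a configuration won
by Duplicator. -/
theorem statement_15 (F : Set FOForm) (hF : IsFragment F) (V V' : Finset ℕ)
    (hVV : V' ⊆ V) (u v : GWord) (α : ℕ → Option u.carrier) (β : ℕ → Option v.carrier)
    (hα : ValDom α V) (hβ : ValDom β V)
    (h : DuplicatorWins ⟨F, u, v, α, β⟩) :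
    DuplicatorWins ⟨F, u, v, fun x => if x ∈ V' then α x else none,
      fun x => if x ∈ V' then β x else none⟩ :=
  statement_15_general F V' u v α β h

end EFGames
end
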